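/- arXiv:1901.01849 — 3 statements merged into one kernel-verified Lean document; each statement's English description precedes it below -/
import Mathlib

section
/- There exists a real number α > 1 such that, defining the sequence g : ℕ → ℝ by g 0 = α and g (n+1) = 2^(g n), the floor ⌊g n⌋ is a prime number for every n ≥ 1. -/
open Real

private lemma wright_next_ex (k : ℕ) (hk : 2 ≤ k) :
    ∃ p : ℕ, p.Prime ∧ 2 ^ k < p ∧ p + 1 < 2 ^ (k + 1) := by
  have h4 : 4 ≤ 2 ^ k := by calc (4:ℕ) = 2 ^ 2 := rfl
                                _ ≤ 2 ^ k := Nat.pow_le_pow_right (by norm_num) hk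
  obtain ⟨p, hp, h1, h2⟩ := Nat.bertrand (2 ^ k - 1) (by omega)
  refine ⟨p, hp, ?_, by omega⟩
  -- p ≥ 2^k; and p ≠ 2^k since 2^k is not prime
  have hge : 2 ^ k ≤ p := by omega
  rcases eq_or_lt_of_le hge with h | h
  · exfalso
    have hdvd : (2 : ℕ) ∣ p := ⟨2 ^ (k - 1), by rw [← h, ← pow_succ']; congr 1; omega⟩
    rcases (hp.eq_one_or_self_of_dvd 2 hdvd) with h' | h' <;> omega
  · exact h

private noncomputable def wrightP : ℕ → ℕ
  | 0 => 3
  | n + 1 =>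
    if h : 2 ≤ wrightP n then (wrightNext (wrightP n) h) else 0
where wrightNext (k : ℕ) (h : 2 ≤ k) : ℕ := (wright_next_ex k h).choose


private lemma wrightP_spec' (n : ℕ) (h : 2 ≤ wrightP n) :
    (wrightP (n + 1)).Prime ∧ 2 ^ wrightP n < wrightP (n + 1) ∧
      wrightP (n + 1) + 1 < 2 ^ (wrightP n + 1) := by
  rw [wrightP, dif_pos h]
  exact (wright_next_ex (wrightP n) h).choose_spec

private lemma wrightP_ge (n : ℕ) : 3 ≤ wrightP n := by
  induction n with
  | zero => simp [wrightP]
  | succ n ih =>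
    obtain ⟨_, h1, _⟩ := wrightP_spec' n (by omega)
    have : 2 ^ 3 ≤ 2 ^ wrightP n := Nat.pow_le_pow_right (by norm_num) ih
    omega

private lemma wrightP_spec (n : ℕ) :
    (wrightP (n + 1)).Prime ∧ 2 ^ wrightP n < wrightP (n + 1) ∧
      wrightP (n + 1) + 1 < 2 ^ (wrightP n + 1) :=
  wrightP_spec' n (by have := wrightP_ge n; omega)

private lemma wrightP_prime (n : ℕ) : (wrightP n).Prime := by
  cases n with
  | zero => norm_num [wrightP]
  | succ n => exact (wrightP_spec n).1

private noncomputable def wE : ℝ → ℝ := fun x => (2 : ℝ) ^ x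
private noncomputable def wL : ℝ → ℝ := fun x => Real.logb 2 x

private lemma wE_mono : StrictMono wE := fun _ _ h =>
  Real.rpow_lt_rpow_of_exponent_lt one_lt_two h

private lemma wE_pos (x : ℝ) : 0 < wE x := Real.rpow_pos_of_pos two_pos x

private lemma wEL (x : ℝ) (hx : 0 < x) : wE (wL x) = x :=
  Real.rpow_logb two_pos (by norm_num) hx

private lemma wL_lt (x y : ℝ) (hx : 0 < x) (h : x < y) : wL x < wL y :=
  Real.logb_lt_logb one_lt_two hx h

/-- cancellation of iterates with positivity -/
private lemma wcancel : ∀ m : ℕ, ∀ x : ℝ, wE^[m] 0 < x →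
    wE^[m] (wL^[m] x) = x ∧ 0 < wL^[m] x := by
  intro m
  induction m with
  | zero => intro x hx; exact ⟨rfl, hx⟩
  | succ m ih =>
    intro x hx
    have h0 : wE^[m + 1] 0 = wE (wE^[m] 0) := Function.iterate_succ_apply' wE m 0
    have hxpos : 0 < x := lt_trans (wE_pos _) (h0 ▸ hx)
    have hL : wE^[m] 0 < wL x := by
      have := wL_lt (wE (wE^[m] 0)) x (wE_pos _) (h0 ▸ hx)
      rwa [show wL (wE (wE^[m] 0)) = wE^[m] 0 from
        Real.logb_rpow two_pos (by norm_num)] at this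
    obtain ⟨hc, hp⟩ := ih (wL x) hL
    have hiter : wL^[m + 1] x = wL^[m] (wL x) := Function.iterate_succ_apply wL m x
    constructor
    · rw [Function.iterate_succ_apply' wE m, hiter, hc, wEL x hxpos]
    · rw [hiter]; exact hp

private noncomputable def wA (n : ℕ) : ℝ := wL^[n + 1] (wrightP n)
private noncomputable def wB (n : ℕ) : ℝ := wL^[n + 1] ((wrightP n : ℝ) + 1)

/-- the towers stay below the primes -/
private lemma wtower (n : ℕ) : wE^[n + 1] 0 < (wrightP n : ℝ) := by
  induction n with
  | zero =>
    show wE 0 < _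
    rw [show wE 0 = 1 from Real.rpow_zero 2]
    norm_num [wrightP]
  | succ n ih =>
    rw [Function.iterate_succ_apply' wE]
    calc wE (wE^[n + 1] 0) < wE (wrightP n) := wE_mono ih
      _ = ((2 ^ wrightP n : ℕ) : ℝ) := by
          rw [wE, Real.rpow_natCast]; push_cast; ring
      _ < (wrightP (n + 1) : ℝ) := by exact_mod_cast (wrightP_spec n).2.1

private lemma wA_cancel (n : ℕ) : wE^[n + 1] (wA n) = (wrightP n : ℝ) :=
  (wcancel (n + 1) _ (wtower n)).1

private lemma wB_cancel (n : ℕ) : wE^[n + 1] (wB n) = (wrightP n : ℝ) + 1 :=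
  (wcancel (n + 1) _ (lt_trans (wtower n) (by linarith))).1

private lemma wP_pos (n : ℕ) : (0 : ℝ) < (wrightP n : ℝ) := by
  have := wrightP_ge n; positivity

private lemma wlog_gt (n : ℕ) : (wrightP n : ℝ) < wL (wrightP (n + 1)) := by
  rw [wL, Real.lt_logb_iff_rpow_lt one_lt_two (wP_pos (n + 1))]
  rw [Real.rpow_natCast]
  exact_mod_cast (wrightP_spec n).2.1

private lemma wlog_ub (n : ℕ) : wL ((wrightP (n + 1) : ℝ) + 1) < (wrightP n : ℝ) + 1 := by
  rw [wL, Real.logb_lt_iff_lt_rpow one_lt_two (by have := wP_pos (n + 1); linarith)]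
  have h : ((wrightP (n + 1) + 1 : ℕ) : ℝ) < ((2 ^ (wrightP n + 1) : ℕ) : ℝ) := by
    exact_mod_cast (wrightP_spec n).2.2
  push_cast at h
  rw [show ((wrightP n : ℝ) + 1) = ((wrightP n + 1 : ℕ) : ℝ) by push_cast; ring,
    Real.rpow_natCast]
  linarith

private lemma wA_succ_cancel (n : ℕ) : wE^[n + 1] (wA (n + 1)) = wL (wrightP (n + 1)) := by
  have h : wE^[n + 1] 0 < wL (wrightP (n + 1)) := lt_trans (wtower n) (wlog_gt n)
  rw [wA, Function.iterate_succ_apply wL (n + 1)]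
  exact (wcancel (n + 1) _ h).1

private lemma wB_succ_cancel (n : ℕ) :
    wE^[n + 1] (wB (n + 1)) = wL ((wrightP (n + 1) : ℝ) + 1) := by
  have hlt : wL (wrightP (n + 1)) < wL ((wrightP (n + 1) : ℝ) + 1) :=
    wL_lt _ _ (wP_pos (n + 1)) (by linarith)
  have h : wE^[n + 1] 0 < wL ((wrightP (n + 1) : ℝ) + 1) :=
    lt_trans (lt_trans (wtower n) (wlog_gt n)) hlt
  rw [wB, Function.iterate_succ_apply wL (n + 1)]
  exact (wcancel (n + 1) _ h).1

private lemma wA_strict : StrictMono wA := by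
  apply strictMono_nat_of_lt_succ
  intro n
  apply ((wE_mono.iterate (n + 1)).lt_iff_lt).1
  rw [wA_cancel n, wA_succ_cancel n]
  exact wlog_gt n

private lemma wB_anti : Antitone wB := by
  apply antitone_nat_of_succ_le
  intro n
  apply ((wE_mono.iterate (n + 1)).le_iff_le).1
  rw [wB_cancel n, wB_succ_cancel n]
  exact (wlog_ub n).le

private lemma wAB (n : ℕ) : wA n < wB n := by
  apply ((wE_mono.iterate (n + 1)).lt_iff_lt).1
  rw [wA_cancel n, wB_cancel n]
  linarith

private lemma wA_lt_B (k j : ℕ) : wA k < wB j := by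
  rcases le_total k j with h | h
  · exact lt_of_le_of_lt (wA_strict.monotone h) (wAB j)
  · exact lt_of_lt_of_le (wAB k) (wB_anti h)

private lemma wA_bdd : BddAbove (Set.range wA) :=
  ⟨wB 0, by rintro x ⟨k, rfl⟩; exact (wA_lt_B k 0).le⟩

/-- Wright's theorem (1951): there is a real constant `α > 1` such that for the
tower sequence `g 0 = α`, `g (n+1) = 2 ^ g n`, the floor `⌊g n⌋` is prime for
every `n ≥ 1`. -/
theorem wright_theorem :
    ∃ α : ℝ, 1 < α ∧ ∀ g : ℕ → ℝ,
      g 0 = α → (∀ n : ℕ, g (n + 1) = (2 : ℝ) ^ g n) →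
      ∀ n : ℕ, 1 ≤ n → Prime ⌊g n⌋ := by
  set α := iSup wA with hα
  have hge : ∀ k, wA k ≤ α := fun k => le_ciSup wA_bdd k
  have hle : ∀ j, α ≤ wB j := fun j => ciSup_le fun k => (wA_lt_B k j).le
  have hgtA : ∀ k, wA k < α := fun k => lt_of_lt_of_le (wA_strict (Nat.lt_succ_self k)) (hge (k + 1))
  refine ⟨α, ?_, ?_⟩
  · -- 1 < α
    have h1 : (1 : ℝ) < wA 0 := by
      show (1 : ℝ) < wL^[1] (wrightP 0)
      rw [Function.iterate_one, wL, Real.lt_logb_iff_rpow_lt one_lt_two (wP_pos 0)]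
      rw [Real.rpow_one]
      have : wrightP 0 = 3 := rfl
      rw [this]; norm_num
    exact lt_trans h1 (hgtA 0)
  · intro g hg0 hgrec n hn
    -- g k = wE^[k] α
    have hgk : ∀ k, g k = wE^[k] α := by
      intro k
      induction k with
      | zero => simpa using hg0
      | succ k ih => rw [hgrec k, ih, Function.iterate_succ_apply' wE]; rfl
    obtain ⟨m, rfl⟩ : ∃ m, n = m + 1 := ⟨n - 1, by omega⟩
    have hfloor : ⌊g (m + 1)⌋ = (wrightP m : ℤ) := by
      rw [Int.floor_eq_iff, hgk (m + 1)]
      constructor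
      · push_cast
        have := (wE_mono.iterate (m + 1)) (hgtA m)
        rw [wA_cancel m] at this
        exact this.le
      · push_cast
        have := (wE_mono.iterate (m + 1)).monotone (hle (m + 1))
        rw [wB_succ_cancel m] at this
        exact lt_of_le_of_lt this (wlog_ub m)
    rw [hfloor]
    exact Nat.prime_iff_prime_int.mp (wrightP_prime m)
end

section
/- There exists a real number c with 0.2655883729431433908971294536654661294389 ≤ c < 0.265588372943143390897129453665466129439 such that for every integer n with 3 ≤ n ≤ 21, the floor ⌊c · n^n⌋ equals, in order, 7, 67, 829, 12391, 218723, 4455833, 102894377, 2655883729, 75775462379, 2368012611049, 80440106764817, 2951219812933057, 116299525867995629, 4899240744635092571, 219705395187452015923, 10449948501874965563651, 525445257345556693801913, 27848959374722952425334841, 1551723179991864497606172809. -/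
/-- There is a real constant `c` in the given decimal range such that
`⌊c * n ^ n⌋` takes the listed 19 values, in order, for `n = 3, ..., 21`. -/
theorem plouffe_nn_constant :
    ∃ c : ℝ,
      0.2655883729431433908971294536654661294389 ≤ c ∧
      c < 0.265588372943143390897129453665466129439 ∧
      ∀ n : ℕ, 3 ≤ n → n ≤ 21 →
        ⌊c * (n : ℝ) ^ n⌋ =
          [(7 : ℤ), 67, 829, 12391, 218723, 4455833, 102894377, 2655883729,
            75775462379, 2368012611049, 80440106764817, 2951219812933057,
            116299525867995629, 4899240744635092571, 219705395187452015923,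
            10449948501874965563651, 525445257345556693801913,
            27848959374722952425334841,
            1551723179991864497606172809][n - 3]! := by
  refine ⟨(2655883729431433908971294536654661294389 : ℝ) / 10 ^ 40,
    by norm_num, by norm_num, ?_⟩
  intro n h3 h21
  interval_cases n <;> norm_num
end

section
/- There exists a real number a with 2.03823915478206876746349086260954825144862477844317361 ≤ a < 2.03823915478206876746349086260954825144862477844317362 such that, defining the sequence a_0 = a and a_{n+1} = a_n^(3/2), the nearest integer to a_n for n = 0, 1, ..., 13 equals, in order, 2, 3, 5, 11, 37, 223, 3331, 192271, 84308429, 774116799347, 681098209317971743, 562101323304225290104514179, 13326678220145859782825116625722145759009, 1538448162271607869601834587431948506238982765193425993274489. -/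
lemma sqrt_step {x l u l' u' : ℝ} (hl : 0 ≤ l) (hl' : 0 ≤ l') (hu' : 0 ≤ u')
    (hlx : l ≤ x) (hxu : x ≤ u) (h2 : l' ^ 2 ≤ l ^ 3) (h3 : u ^ 3 ≤ u' ^ 2) :
    l' ≤ x ^ ((3 : ℝ) / 2) ∧ x ^ ((3 : ℝ) / 2) ≤ u' := by
  have hx : (0:ℝ) ≤ x := hl.trans hlx
  have key : x ^ ((3 : ℝ) / 2) = Real.sqrt (x ^ 3) := by
    rw [Real.sqrt_eq_rpow, ← Real.rpow_natCast x 3, ← Real.rpow_mul hx]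
    norm_num
  have hx3 : l ^ 3 ≤ x ^ 3 := pow_le_pow_left₀ hl hlx 3
  have hx3' : x ^ 3 ≤ u ^ 3 := pow_le_pow_left₀ hx hxu 3
  constructor
  · rw [key]
    calc l' = Real.sqrt (l' ^ 2) := (Real.sqrt_sq hl').symm
    _ ≤ Real.sqrt (x ^ 3) := Real.sqrt_le_sqrt (h2.trans hx3)
  · rw [key]
    calc Real.sqrt (x ^ 3) ≤ Real.sqrt (u' ^ 2) := Real.sqrt_le_sqrt (hx3'.trans h3)
    _ = u' := Real.sqrt_sq hu'

lemma round_of {x : ℝ} {N : ℤ} (h1 : (N : ℝ) - 1/2 ≤ x) (h2 : x < (N : ℝ) + 1/2) :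
    round x = N := by
  rw [round_eq, Int.floor_eq_iff]
  constructor <;> push_cast <;> linarith

/-- There is a real starting value `a` in the given decimal range such that for
the iteration `a 0 = a`, `a (n+1) = (a n) ^ (3/2)`, the nearest integer to
`a n` takes the listed 14 values, in order, for `n = 0, ..., 13`. -/
theorem exponent_three_halves_sequence :
    ∃ a : ℝ,
      2.03823915478206876746349086260954825144862477844317361 ≤ a ∧
      a < 2.03823915478206876746349086260954825144862477844317362 ∧
      ∀ f : ℕ → ℝ,
        f 0 = a → (∀ n : ℕ, f (n + 1) = f n ^ ((3 : ℝ) / 2)) →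
        ∀ n : ℕ, n ≤ 13 →
          round (f n) =
            [(2 : ℤ), 3, 5, 11, 37, 223, 3331, 192271, 84308429, 774116799347,
              681098209317971743, 562101323304225290104514179,
              13326678220145859782825116625722145759009,
              1538448162271607869601834587431948506238982765193425993274489][n]! := by
  refine ⟨(20382391547820687674634908626095482514486247784431736138796757301944290633722200130128253219549610535198967991356613125082536364491 : ℝ) / 10 ^ 130, by norm_num, by norm_num, ?_⟩
  intro f hf0 hstep
  have h0 : (20382391547820687674634908626095482514486247784431736138796757301944290633722200130128253219549610535198967991356613125082536364491 : ℝ) / 10 ^ 130 ≤ f 0 ∧ f 0 ≤ (20382391547820687674634908626095482514486247784431736138796757301944290633722200130128253219549610535198967991356613125082536364491 : ℝ) / 10 ^ 130 := by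
    rw [hf0]; exact ⟨le_refl _, le_refl _⟩
  have h1 : (29099311279973505213711234889801313491594890175307128833203523472308153823382027751916228214030021600450957034936664132511686035651 : ℝ) / 10 ^ 130 ≤ f 1 ∧ f 1 ≤ (29099311279973505213711234889801313491594890175307128833203523472308153823382027751916228214030021600450957034936664132511686035652 : ℝ) / 10 ^ 130 := by
    rw [hstep 0]
    exact sqrt_step (by positivity) (by positivity) (by positivity) h0.1 h0.2 (by norm_num) (by norm_num)
  have h2 : (49639119045760909498873669398305581241261349636664302806223963834790529081998170951958922701588401645307688321589153711400557911061 : ℝ) / 10 ^ 130 ≤ f 2 ∧ f 2 ≤ (49639119045760909498873669398305581241261349636664302806223963834790529081998170951958922701588401645307688321589153711400557911064 : ℝ) / 10 ^ 130 := by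
    rw [hstep 1]
    exact sqrt_step (by positivity) (by positivity) (by positivity) h1.1 h1.2 (by norm_num) (by norm_num)
  have h3 : (110595154099681438108616281800118171684033653007284535668939947562550389121366700971623600637627413363710070793370249612535422441260 : ℝ) / 10 ^ 130 ≤ f 3 ∧ f 3 ≤ (110595154099681438108616281800118171684033653007284535668939947562550389121366700971623600637627413363710070793370249612535422441271 : ℝ) / 10 ^ 130 := by
    rw [hstep 2]
    exact sqrt_step (by positivity) (by positivity) (by positivity) h2.1 h2.2 (by norm_num) (by norm_num)
  have h4 : (367793582516035797360489340814117345021313415174961028634146447824903310665750851253215711950890667016404174295965578893695419219601 : ℝ) / 10 ^ 130 ≤ f 4 ∧ f 4 ≤ (367793582516035797360489340814117345021313415174961028634146447824903310665750851253215711950890667016404174295965578893695419219657 : ℝ) / 10 ^ 130 := by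
    rw [hstep 3]
    exact sqrt_step (by positivity) (by positivity) (by positivity) h3.1 h3.2 (by norm_num) (by norm_num)
  have h5 : (2230520508459583478000200768381429855643505774297402017244365100960841896322107966444104831450591237583980880939417233502599581318644 : ℝ) / 10 ^ 130 ≤ f 5 ∧ f 5 ≤ (2230520508459583478000200768381429855643505774297402017244365100960841896322107966444104831450591237583980880939417233502599581319154 : ℝ) / 10 ^ 130 := by
    rw [hstep 4]
    exact sqrt_step (by positivity) (by positivity) (by positivity) h4.1 h4.2 (by norm_num) (by norm_num)
  have h6 : (33312661440077700388147904770834243115944860238863054809754231359189326765623565912122154258638159101143013331691369670094110135774280 : ℝ) / 10 ^ 130 ≤ f 6 ∧ f 6 ≤ (33312661440077700388147904770834243115944860238863054809754231359189326765623565912122154258638159101143013331691369670094110135785706 : ℝ) / 10 ^ 130 := by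
    rw [hstep 5]
    exact sqrt_step (by positivity) (by positivity) (by positivity) h5.1 h5.2 (by norm_num) (by norm_num)
  have h7 : (1922710936414216758448936777364283514230449141300596619081796184778303069212746461883921184712262389860279426692226465255478611786110219 : ℝ) / 10 ^ 130 ≤ f 7 ∧ f 7 ≤ (1922710936414216758448936777364283514230449141300596619081796184778303069212746461883921184712262389860279426692226465255478611787099434 : ℝ) / 10 ^ 130 := by
    rw [hstep 6]
    exact sqrt_step (by positivity) (by positivity) (by positivity) h6.1 h6.2 (by norm_num) (by norm_num)
  have h8 : (843084286365865613974441098907627107342066075035584298299458022373514221045941372161690395195764964154294852765164786806974701900461794354 : ℝ) / 10 ^ 130 ≤ f 8 ∧ f 8 ≤ (843084286365865613974441098907627107342066075035584298299458022373514221045941372161690395195764964154294852765164786806974701901112431645 : ℝ) / 10 ^ 130 := by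
    rw [hstep 7]
    exact sqrt_step (by positivity) (by positivity) (by positivity) h7.1 h7.2 (by norm_num) (by norm_num)
  have h9 : (7741167993474544887193479021680366333269536021577402706882561006541406006735386689604800725430842961872140335387437500912474016690613149840901 : ℝ) / 10 ^ 130 ≤ f 9 ∧ f 9 ≤ (7741167993474544887193479021680366333269536021577402706882561006541406006735386689604800725430842961872140335387437500912474016699574340294637 : ℝ) / 10 ^ 130 := by
    rw [hstep 8]
    exact sqrt_step (by positivity) (by positivity) (by positivity) h8.1 h8.2 (by norm_num) (by norm_num)
  have h10 : (6810982093179717430817259893601453074406743615233303789953484482105909632041892667815768722431893384930720233683177167148305038978782676425078546490 : ℝ) / 10 ^ 130 ≤ f 10 ∧ f 10 ≤ (6810982093179717430817259893601453074406743615233303789953484482105909632041892667815768722431893384930720233683177167148305038990609284715730213804 : ℝ) / 10 ^ 130 := by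
    rw [hstep 9]
    exact sqrt_step (by positivity) (by positivity) (by positivity) h9.1 h9.2 (by norm_num) (by norm_num)
  have h11 : (5621013233042252901045141794800555896300306674559954178679163181601059552727912295912100252833714817913006522095909896181059063521012107902033635913425071498 : ℝ) / 10 ^ 130 ≤ f 11 ∧ f 11 ≤ (5621013233042252901045141794800555896300306674559954178679163181601059552727912295912100252833714817913006522095909896181059063535652622469748152050975554959 : ℝ) / 10 ^ 130 := by
    rw [hstep 10]
    exact sqrt_step (by positivity) (by positivity) (by positivity) h10.1 h10.2 (by norm_num) (by norm_num)
  have h12 : (133266782201458597828251166257221457590093072931341418799382207921443993600390847006325071216825384767753699832542834880779817759313377093932307893325947897789872391586602 : ℝ) / 10 ^ 130 ≤ f 12 ∧ f 12 ≤ (133266782201458597828251166257221457590093072931341418799382207921443993600390847006325071216825384767753699832542834880779817759834037921079188026732652405989762284185036 : ℝ) / 10 ^ 130 := by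
    rw [hstep 11]
    exact sqrt_step (by positivity) (by positivity) (by positivity) h11.1 h11.2 (by norm_num) (by norm_num)
  have h13 : (15384481622716078696018345874319485062389827651934259932744889999999999999999999999999999999999999999999999999999999999999999999816419647901429374442839462513740977364315508527225916482451956 : ℝ) / 10 ^ 130 ≤ f 13 ∧ f 13 ≤ (15384481622716078696018345874319485062389827651934259932744889999999999999999999999999999999999999999999999999999999999999999999906578239501553491673150758465416346792325229742615400775875092 : ℝ) / 10 ^ 130 := by
    rw [hstep 12]
    exact sqrt_step (by positivity) (by positivity) (by positivity) h12.1 h12.2 (by norm_num) (by norm_num)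
  intro n hn
  interval_cases n
  · have : round (f 0) = (2 : ℤ) :=
      round_of (le_trans (by norm_num) h0.1) (lt_of_le_of_lt h0.2 (by norm_num))
    rw [this]; rfl
  · have : round (f 1) = (3 : ℤ) :=
      round_of (le_trans (by norm_num) h1.1) (lt_of_le_of_lt h1.2 (by norm_num))
    rw [this]; rfl
  · have : round (f 2) = (5 : ℤ) :=
      round_of (le_trans (by norm_num) h2.1) (lt_of_le_of_lt h2.2 (by norm_num))
    rw [this]; rfl
  · have : round (f 3) = (11 : ℤ) :=
      round_of (le_trans (by norm_num) h3.1) (lt_of_le_of_lt h3.2 (by norm_num))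
    rw [this]; rfl
  · have : round (f 4) = (37 : ℤ) :=
      round_of (le_trans (by norm_num) h4.1) (lt_of_le_of_lt h4.2 (by norm_num))
    rw [this]; rfl
  · have : round (f 5) = (223 : ℤ) :=
      round_of (le_trans (by norm_num) h5.1) (lt_of_le_of_lt h5.2 (by norm_num))
    rw [this]; rfl
  · have : round (f 6) = (3331 : ℤ) :=
      round_of (le_trans (by norm_num) h6.1) (lt_of_le_of_lt h6.2 (by norm_num))
    rw [this]; rfl
  · have : round (f 7) = (192271 : ℤ) :=
      round_of (le_trans (by norm_num) h7.1) (lt_of_le_of_lt h7.2 (by norm_num))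
    rw [this]; rfl
  · have : round (f 8) = (84308429 : ℤ) :=
      round_of (le_trans (by norm_num) h8.1) (lt_of_le_of_lt h8.2 (by norm_num))
    rw [this]; rfl
  · have : round (f 9) = (774116799347 : ℤ) :=
      round_of (le_trans (by norm_num) h9.1) (lt_of_le_of_lt h9.2 (by norm_num))
    rw [this]; rfl
  · have : round (f 10) = (681098209317971743 : ℤ) :=
      round_of (le_trans (by norm_num) h10.1) (lt_of_le_of_lt h10.2 (by norm_num))
    rw [this]; rfl
  · have : round (f 11) = (562101323304225290104514179 : ℤ) :=
      round_of (le_trans (by norm_num) h11.1) (lt_of_le_of_lt h11.2 (by norm_num))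
    rw [this]; rfl
  · have : round (f 12) = (13326678220145859782825116625722145759009 : ℤ) :=
      round_of (le_trans (by norm_num) h12.1) (lt_of_le_of_lt h12.2 (by norm_num))
    rw [this]; rfl
  · have : round (f 13) = (1538448162271607869601834587431948506238982765193425993274489 : ℤ) :=
      round_of (le_trans (by norm_num) h13.1) (lt_of_le_of_lt h13.2 (by norm_num))
    rw [this]; rfl
end
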